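/- Let f̂ be a consistent numerical flux with Lipschitz constant L, let (uⱼ)ⱼ be a grid function evolved by the finite-volume scheme uⱼⁿ⁺¹ = uⱼⁿ - (Δt/Δx_j)(f̂(uⱼⁿ, uⱼ₊₁ⁿ) - f̂(uⱼ₋₁ⁿ, uⱼⁿ)), and define the local residual bound rⱼ := (1/2)Δt²|f̂(uⱼ₋₁,uⱼ) - f̂(uⱼ,uⱼ₊₁)| + (1/2)Δx_j Δt|f̂(uⱼ₋₁,uⱼ) + f̂(uⱼ,uⱼ₊₁) - 2f(uⱼ)|. Then Σⱼ rⱼ ≤ 2L·Δt·(Δt + Δx)·TV[u], where Δx = maxⱼ Δx_j and TV[u] = Σⱼ |uⱼ₊₁ - uⱼ|. -/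
import Mathlib


/-- Global bound on the sum of the local residual bounds (Remark 2): for a
consistent numerical flux with Lipschitz constant `L` and a grid function that is
constant outside the index range `[-M, M]`,
`Σⱼ rⱼ ≤ 2 L Δt (Δt + Δx) · TV[u]`, where
`rⱼ = ½Δt²|f̂ⱼ₋₁/₂ - f̂ⱼ₊₁/₂| + ½Δxⱼ Δt|f̂ⱼ₋₁/₂ + f̂ⱼ₊₁/₂ - 2f(uⱼ)|`,
`Δx = maxⱼ Δxⱼ` and `TV[u] = Σⱼ |uⱼ₊₁ - uⱼ|`. -/
theorem stmt_16 (M : ℕ) (L Δt Δx : ℝ) (Δxj : ℤ → ℝ) (f : ℝ → ℝ) (fhat : ℝ → ℝ → ℝ)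
    (u : ℤ → ℝ)
    (hL : 0 ≤ L)
    (hLip : ∀ a b a' b' : ℝ, |fhat a b - fhat a' b'| ≤ L * (|a - a'| + |b - b'|))
    (hcons : ∀ v : ℝ, fhat v v = f v)
    (hΔt : 0 < Δt)
    (hΔxj : ∀ j : ℤ, 0 < Δxj j) (hΔx : ∀ j : ℤ, Δxj j ≤ Δx)
    (hleft : ∀ j : ℤ, j ≤ -(M : ℤ) → u j = u (-(M : ℤ)))
    (hright : ∀ j : ℤ, (M : ℤ) ≤ j → u j = u (M : ℤ)) :
    let r : ℤ → ℝ := fun j =>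
      (1 / 2) * Δt ^ 2 * |fhat (u (j - 1)) (u j) - fhat (u j) (u (j + 1))|
        + (1 / 2) * Δxj j * Δt * |fhat (u (j - 1)) (u j) + fhat (u j) (u (j + 1)) - 2 * f (u j)|
    let TV : ℝ := ∑ j ∈ Finset.Icc (-(M : ℤ)) (M : ℤ), |u (j + 1) - u j|
    ∑ j ∈ Finset.Icc (-(M : ℤ)) (M : ℤ), r j ≤ 2 * L * Δt * (Δt + Δx) * TV := by
  intro r TV
  have hΔxpos : 0 < Δx := lt_of_lt_of_le (hΔxj 0) (hΔx 0)
  set c : ℝ := L * Δt * (Δt + Δx) with hc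
  have hcnn : 0 ≤ c := by
    apply mul_nonneg (mul_nonneg hL hΔt.le); linarith
  -- pointwise bound
  have key : ∀ j : ℤ, r j ≤ c * (|u j - u (j - 1)| + |u (j + 1) - u j|) := by
    intro j
    set a := |u j - u (j - 1)| with ha
    set b := |u (j + 1) - u j| with hb
    have hann : 0 ≤ a := abs_nonneg _
    have hbnn : 0 ≤ b := abs_nonneg _
    have h1 : |fhat (u (j - 1)) (u j) - fhat (u j) (u (j + 1))| ≤ L * (a + b) := by
      have := hLip (u (j - 1)) (u j) (u j) (u (j + 1))
      rw [abs_sub_comm (u (j - 1)) (u j), abs_sub_comm (u j) (u (j + 1))] at this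
      exact this
    have h2 : |fhat (u (j - 1)) (u j) + fhat (u j) (u (j + 1)) - 2 * f (u j)| ≤ L * (a + b) := by
      have e1 := hLip (u (j - 1)) (u j) (u j) (u j)
      have e2 := hLip (u j) (u (j + 1)) (u j) (u j)
      rw [hcons] at e1 e2
      simp only [sub_self, abs_zero, add_zero, zero_add] at e1 e2
      rw [abs_sub_comm (u (j - 1)) (u j)] at e1
      calc |fhat (u (j - 1)) (u j) + fhat (u j) (u (j + 1)) - 2 * f (u j)|
          = |(fhat (u (j - 1)) (u j) - f (u j)) + (fhat (u j) (u (j + 1)) - f (u j))| := by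
            ring_nf
        _ ≤ |fhat (u (j - 1)) (u j) - f (u j)| + |fhat (u j) (u (j + 1)) - f (u j)| :=
            abs_add_le _ _
        _ ≤ L * a + L * b := add_le_add e1 e2
        _ = L * (a + b) := by ring
    have habs1 : 0 ≤ |fhat (u (j - 1)) (u j) - fhat (u j) (u (j + 1))| := abs_nonneg _
    have habs2 : 0 ≤ |fhat (u (j - 1)) (u j) + fhat (u j) (u (j + 1)) - 2 * f (u j)| := abs_nonneg _
    have hxj := hΔxj j
    have hxjle := hΔx j
    show (1 / 2) * Δt ^ 2 * |fhat (u (j - 1)) (u j) - fhat (u j) (u (j + 1))|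
        + (1 / 2) * Δxj j * Δt * |fhat (u (j - 1)) (u j) + fhat (u j) (u (j + 1)) - 2 * f (u j)|
        ≤ c * (a + b)
    have t1 : (1 / 2) * Δt ^ 2 * |fhat (u (j - 1)) (u j) - fhat (u j) (u (j + 1))|
        ≤ (1 / 2) * Δt ^ 2 * (L * (a + b)) := by
      apply mul_le_mul_of_nonneg_left h1; positivity
    have t2 : (1 / 2) * Δxj j * Δt * |fhat (u (j - 1)) (u j) + fhat (u j) (u (j + 1)) - 2 * f (u j)|
        ≤ (1 / 2) * Δx * Δt * (L * (a + b)) := by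
      have h3 : Δxj j * |fhat (u (j - 1)) (u j) + fhat (u j) (u (j + 1)) - 2 * f (u j)|
          ≤ Δx * (L * (a + b)) := mul_le_mul hxjle h2 habs2 hΔxpos.le
      nlinarith [hΔt.le]
    have hc2 : 0 ≤ c * (a + b) := mul_nonneg hcnn (by linarith)
    have : (1 / 2) * Δt ^ 2 * (L * (a + b)) + (1 / 2) * Δx * Δt * (L * (a + b))
        = (1 / 2) * (c * (a + b)) := by rw [hc]; ring
    linarith
  -- sum bound
  have hTVnn : 0 ≤ TV := Finset.sum_nonneg fun j _ => abs_nonneg _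
  have back : ∑ j ∈ Finset.Icc (-(M : ℤ)) (M : ℤ), |u j - u (j - 1)| ≤ TV := by
    have e1 : ∑ j ∈ Finset.Icc (-(M : ℤ)) (M : ℤ), |u j - u (j - 1)|
        = ∑ j ∈ Finset.Icc (-(M : ℤ) - 1) ((M : ℤ) - 1), |u (j + 1) - u j| := by
      rw [show Finset.Icc (-(M : ℤ)) (M : ℤ)
          = Finset.map (addRightEmbedding 1) (Finset.Icc (-(M : ℤ) - 1) ((M : ℤ) - 1)) by
        rw [Finset.map_add_right_Icc]; norm_num]
      rw [Finset.sum_map]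
      simp [addRightEmbedding]
    rw [e1]
    have subset1 : Finset.Icc (-(M : ℤ) - 1) ((M : ℤ) - 1) ⊆ Finset.Icc (-(M : ℤ) - 1) (M : ℤ) :=
      Finset.Icc_subset_Icc le_rfl (by linarith)
    have step1 : ∑ j ∈ Finset.Icc (-(M : ℤ) - 1) ((M : ℤ) - 1), |u (j + 1) - u j|
        ≤ ∑ j ∈ Finset.Icc (-(M : ℤ) - 1) (M : ℤ), |u (j + 1) - u j| :=
      Finset.sum_le_sum_of_subset_of_nonneg subset1 (fun _ _ _ => abs_nonneg _)
    have step2 : ∑ j ∈ Finset.Icc (-(M : ℤ) - 1) (M : ℤ), |u (j + 1) - u j| = TV := by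
      rw [show TV = ∑ j ∈ Finset.Icc (-(M : ℤ)) (M : ℤ), |u (j + 1) - u j| from rfl]
      symm
      apply Finset.sum_subset (Finset.Icc_subset_Icc (by linarith) le_rfl)
      intro x hx hnx
      have hx1 : x = -(M : ℤ) - 1 := by
        simp only [Finset.mem_Icc] at hx hnx
        omega
      subst hx1
      have e1 : u (-(M : ℤ) - 1) = u (-(M : ℤ)) := hleft _ (by omega)
      have e2 : u (-(M : ℤ) - 1 + 1) = u (-(M : ℤ)) := hleft _ (by omega)
      rw [e1, e2, sub_self, abs_zero]
    linarith
  calc ∑ j ∈ Finset.Icc (-(M : ℤ)) (M : ℤ), r j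
      ≤ ∑ j ∈ Finset.Icc (-(M : ℤ)) (M : ℤ), c * (|u j - u (j - 1)| + |u (j + 1) - u j|) :=
        Finset.sum_le_sum fun j _ => key j
    _ = c * ((∑ j ∈ Finset.Icc (-(M : ℤ)) (M : ℤ), |u j - u (j - 1)|) + TV) := by
        rw [← Finset.mul_sum, Finset.sum_add_distrib]
    _ ≤ c * (TV + TV) := by
        apply mul_le_mul_of_nonneg_left _ hcnn
        linarith
    _ ≤ 2 * L * Δt * (Δt + Δx) * TV := by rw [hc]; ring_nf; linarith [mul_nonneg hcnn hTVnn]
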